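/- arXiv:1201.3701 — 6 statements merged into one kernel-verified Lean document; each statement's English description precedes it below -/
import Mathlib

section
/- For every real number t with 0 < |t|, the Fourier transform (characteristic function) of the logistic density satisfies ∫_{-∞}^{∞} e^{i t u} (π/2) sech²(π u) du = (t/2) · csch(t/2) = (t/2)/sinh(t/2); for t = 0 the integral equals 1. -/
/-!
Since `σ(x) / σ(-x) = eˣ` for the sigmoid `σ` and `σ' = σ(x) σ(-x)`, the substitution `y = σ(x)`
turns `∫ e^{sx} σ(x) σ(-x) dx` into the Beta integral `B(1 + s, 1 - s) = Γ(1 + s) Γ(1 - s)`,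
which Euler's reflection formula evaluates to `π s / sin (π s)`. The logistic density
`(π/2) sech²(π u)` is `2π σ(2πu) σ(-2πu)`, so its characteristic function at `t` is the case
`s = i t / (2π)`, where `π s / sin (π s) = (t/2) / sinh (t/2)`.
-/

open MeasureTheory Real Set

lemma sigmoid_mul_sigmoid_neg (x : ℝ) :
    sigmoid x * sigmoid (-x) = (1 / cosh (x / 2)) ^ 2 / 4 := by
  have hx : exp x = exp (x / 2) ^ 2 := by rw [← exp_nat_mul]; ring_nf
  rw [sigmoid_def, sigmoid_def, neg_neg, cosh_eq, exp_neg, exp_neg, hx]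
  field_simp
  ring

lemma hasDerivAt_sigmoid' (x : ℝ) : HasDerivAt sigmoid (sigmoid x * sigmoid (-x)) x := by
  simpa only [sigmoid_neg] using hasDerivAt_sigmoid x

lemma log_sigmoid_sub_log_sigmoid_neg (x : ℝ) :
    log (sigmoid x) - log (sigmoid (-x)) = x := by
  rw [← sigmoid_mul_rexp_neg, log_mul (sigmoid_pos x).ne' (exp_pos _).ne', log_exp]
  ring

lemma sigmoid_cpow_mul_sigmoid_neg_cpow (s : ℂ) (x : ℝ) :
    (sigmoid x : ℂ) ^ s * (sigmoid (-x) : ℂ) ^ (-s) = Complex.exp (s * x) := by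
  rw [Complex.cpow_def_of_ne_zero (by exact_mod_cast (sigmoid_pos x).ne'),
    Complex.cpow_def_of_ne_zero (by exact_mod_cast (sigmoid_pos (-x)).ne'),
    ← Complex.exp_add, ← Complex.ofReal_log (sigmoid_pos x).le,
    ← Complex.ofReal_log (sigmoid_pos (-x)).le]
  have h := congrArg ((↑) : ℝ → ℂ) (log_sigmoid_sub_log_sigmoid_neg x)
  push_cast at h
  congr 1
  linear_combination s * h

section ChangeOfVariables

variable {E : Type*} [NormedAddCommGroup E] [NormedSpace ℝ E]

lemma abs_sigmoid_mul_sigmoid_neg (x : ℝ) :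
    |sigmoid x * sigmoid (-x)| = sigmoid x * sigmoid (-x) :=
  abs_of_pos (mul_pos (sigmoid_pos x) (sigmoid_pos (-x)))

lemma integrableOn_Ioo_iff_integrable_sigmoid_smul (f : ℝ → E) :
    IntegrableOn f (Ioo 0 1) ↔
      Integrable (fun x => (sigmoid x * sigmoid (-x)) • f (sigmoid x)) := by
  have h := integrableOn_image_iff_integrableOn_abs_deriv_smul MeasurableSet.univ
    (fun x _ => (hasDerivAt_sigmoid' x).hasDerivWithinAt) sigmoid_injective.injOn f
  simpa only [image_univ, range_sigmoid, integrableOn_univ, abs_sigmoid_mul_sigmoid_neg] using h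

lemma setIntegral_Ioo_eq_integral_sigmoid_smul (f : ℝ → E) :
    ∫ y in Ioo 0 1, f y = ∫ x, (sigmoid x * sigmoid (-x)) • f (sigmoid x) := by
  have h := integral_image_eq_integral_abs_deriv_smul MeasurableSet.univ
    (fun x _ => (hasDerivAt_sigmoid' x).hasDerivWithinAt) sigmoid_injective.injOn f
  simpa only [image_univ, range_sigmoid, setIntegral_univ, abs_sigmoid_mul_sigmoid_neg] using h

lemma integral_smul_comp_mul_left {a : ℝ} (ha : 0 < a) (g : ℝ → E) :
    ∫ u, a • g (a * u) = ∫ x, g x := by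
  rw [integral_smul, Measure.integral_comp_mul_left, abs_of_pos (inv_pos.mpr ha), smul_smul,
    mul_inv_cancel₀ ha.ne', one_smul]

end ChangeOfVariables

lemma betaIntegrand_sigmoid (s : ℂ) (x : ℝ) :
    (sigmoid x : ℂ) ^ (1 + s - 1) * (1 - (sigmoid x : ℂ)) ^ (1 - s - 1) =
      Complex.exp (s * x) := by
  rw [add_sub_cancel_left, sub_sub_cancel_left, ← sigmoid_cpow_mul_sigmoid_neg_cpow, sigmoid_neg]
  push_cast
  rfl

lemma re_one_add_pos_and_re_one_sub_pos {s : ℂ} (hs : |s.re| < 1) :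
    0 < (1 + s).re ∧ 0 < (1 - s).re := by
  rw [abs_lt] at hs
  simp only [Complex.add_re, Complex.sub_re, Complex.one_re]
  constructor <;> linarith

lemma integrable_cexp_mul_sigmoid_mul_sigmoid_neg {s : ℂ} (hs : |s.re| < 1) :
    Integrable (fun x : ℝ => Complex.exp (s * x) * ((sigmoid x * sigmoid (-x) : ℝ) : ℂ)) := by
  obtain ⟨hs₁, hs₂⟩ := re_one_add_pos_and_re_one_sub_pos hs
  have h := Complex.betaIntegral_convergent hs₁ hs₂
  rw [intervalIntegrable_iff_integrableOn_Ioo_of_le zero_le_one,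
    integrableOn_Ioo_iff_integrable_sigmoid_smul] at h
  simpa only [betaIntegrand_sigmoid, Complex.real_smul, mul_comm] using h

lemma integral_cexp_mul_sigmoid_mul_sigmoid_neg (s : ℂ) :
    ∫ x : ℝ, Complex.exp (s * x) * ((sigmoid x * sigmoid (-x) : ℝ) : ℂ) =
      Complex.betaIntegral (1 + s) (1 - s) := by
  rw [Complex.betaIntegral, intervalIntegral.integral_of_le zero_le_one,
    integral_Ioc_eq_integral_Ioo, setIntegral_Ioo_eq_integral_sigmoid_smul]
  simp only [betaIntegrand_sigmoid, Complex.real_smul, mul_comm]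

lemma betaIntegral_one_add_one_sub {s : ℂ} (hs : |s.re| < 1) (hs0 : s ≠ 0) :
    Complex.betaIntegral (1 + s) (1 - s) = π * s / Complex.sin (π * s) := by
  obtain ⟨hs₁, hs₂⟩ := re_one_add_pos_and_re_one_sub_pos hs
  have hΓ := Complex.Gamma_mul_Gamma_eq_betaIntegral hs₁ hs₂
  rw [add_add_sub_cancel, one_add_one_eq_two, show Complex.Gamma 2 = 1 by simp, one_mul] at hΓ
  rw [← hΓ, add_comm, Complex.Gamma_add_one s hs0, mul_assoc, Complex.Gamma_mul_Gamma_one_sub]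
  ring

lemma betaIntegral_one_add_mul_I_one_sub_mul_I {τ : ℝ} (hτ : τ ≠ 0) :
    Complex.betaIntegral (1 + τ * Complex.I) (1 - τ * Complex.I) =
      π * τ / Complex.sinh (π * τ) := by
  rw [betaIntegral_one_add_one_sub (by simp) (by simpa using hτ), ← mul_assoc,
    Complex.sin_mul_I]
  have : Complex.sinh (π * τ) ≠ 0 := by
    exact_mod_cast sinh_ne_zero.mpr (mul_ne_zero pi_ne_zero hτ)
  field_simp

lemma cexp_mul_logisticDensity_eq (t u : ℝ) :
    Complex.exp (Complex.I * t * u) * (((π / 2) * (1 / cosh (π * u)) ^ 2 : ℝ) : ℂ) =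
      (2 * π) • (Complex.exp (((t / (2 * π) : ℝ) * Complex.I) * ((2 * π * u : ℝ) : ℂ)) *
        ((sigmoid (2 * π * u) * sigmoid (-(2 * π * u)) : ℝ) : ℂ)) := by
  rw [sigmoid_mul_sigmoid_neg, show 2 * π * u / 2 = π * u by ring, Complex.real_smul]
  have : (π : ℂ) ≠ 0 := by exact_mod_cast pi_ne_zero
  push_cast
  field_simp
  ring_nf

/-- The characteristic function of the logistic density `u ↦ (π/2) sech²(π u)`:
for `0 < |t|` it equals `(t/2)·csch(t/2) = (t/2)/sinh(t/2)`, and for `t = 0` the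
integral equals `1`; the integral is absolutely convergent (integrable integrand). -/
theorem statement_0 (t : ℝ) :
    Integrable (fun u : ℝ =>
      Complex.exp (Complex.I * (t : ℂ) * (u : ℂ)) *
        (((π / 2) * (1 / Real.cosh (π * u)) ^ 2 : ℝ) : ℂ)) ∧
    (0 < |t| →
      (∫ u : ℝ, Complex.exp (Complex.I * (t : ℂ) * (u : ℂ)) *
          (((π / 2) * (1 / Real.cosh (π * u)) ^ 2 : ℝ) : ℂ)) =
        ((t : ℂ) / 2) * (1 / Complex.sinh ((t : ℂ) / 2)) ∧
      ((t : ℂ) / 2) * (1 / Complex.sinh ((t : ℂ) / 2)) =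
        ((t : ℂ) / 2) / Complex.sinh ((t : ℂ) / 2)) ∧
    (t = 0 →
      (∫ u : ℝ, Complex.exp (Complex.I * (t : ℂ) * (u : ℂ)) *
          (((π / 2) * (1 / Real.cosh (π * u)) ^ 2 : ℝ) : ℂ)) = 1) := by
  have h2π : 0 < 2 * π := by positivity
  set g : ℝ → ℂ := fun x =>
    Complex.exp (((t / (2 * π) : ℝ) * Complex.I) * x) * ((sigmoid x * sigmoid (-x) : ℝ) : ℂ)
    with hg
  have hg_int : Integrable g := integrable_cexp_mul_sigmoid_mul_sigmoid_neg
    (by rw [Complex.re_ofReal_mul, Complex.I_re, mul_zero, abs_zero]; exact one_pos)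
  have hF : (fun u : ℝ => Complex.exp (Complex.I * t * u) *
      (((π / 2) * (1 / cosh (π * u)) ^ 2 : ℝ) : ℂ)) = fun u => (2 * π) • g (2 * π * u) :=
    funext (cexp_mul_logisticDensity_eq t)
  rw [hF, integral_smul_comp_mul_left h2π g, hg, integral_cexp_mul_sigmoid_mul_sigmoid_neg]
  refine ⟨(hg_int.comp_mul_left' h2π.ne').smul (2 * π), fun ht => ⟨?_, mul_one_div _ _⟩,
    fun ht => ?_⟩
  · have hπ : (π : ℂ) ≠ 0 := by exact_mod_cast pi_ne_zero
    rw [betaIntegral_one_add_mul_I_one_sub_mul_I (div_ne_zero (abs_pos.mp ht) h2π.ne'),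
      show (π : ℂ) * ((t / (2 * π) : ℝ) : ℂ) = t / 2 by push_cast; field_simp, mul_one_div]
  · simpa [ht] using Complex.betaIntegral_eval_one_right (u := 1) (by simp)
end

section
/- (Cancellation lemma, Euler case) For every natural number n and every real number x, (1/2) ∫_{-∞}^{∞} [ (x - 1/2 + i u)^n + (x + 1/2 + i u)^n ] · sech(π u) du = xⁿ; that is, adding an independent Rademacher shift (taking values 0 and 1 each with probability 1/2) to x - 1/2 + i·(hyperbolic secant variable) reduces every integer moment to xⁿ. -/
/-!
Let `Q` be entire and of exponential type less than `π` in the strip `0 ≤ Im z ≤ 1`. The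
function `(Q z - Q (i/2)) / cosh (π z)` is then holomorphic on the closed strip (the only zero
of `cosh (π z)` there, `i/2`, is cancelled by the numerator) and decays at both ends of it.
Shifting the line of integration from `ℝ` to `ℝ + i`, and using `cosh (π (u + i)) = -cosh (π u)`,
gives `∫ (Q u + Q (u + i)) sech (π u) du = 2 Q (i/2) ∫ sech (π u) du = 2 Q (i/2)`.
For `Q z = (x + 1/2 + i z)ⁿ` we have `Q u = (x + 1/2 + i u)ⁿ`, `Q (u + i) = (x - 1/2 + i u)ⁿ`
and `Q (i/2) = xⁿ`.
-/

open MeasureTheory Real Filter Topology Set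
open scoped Interval

lemma one_div_cosh_le_two_mul_exp_neg_abs (x : ℝ) : 1 / cosh x ≤ 2 * exp (-|x|) := by
  have h : exp |x| ≤ 2 * cosh x := by rw [cosh_eq]; linarith [exp_abs_le x]
  rw [exp_neg, div_le_iff₀ (cosh_pos x)]
  calc (1 : ℝ) = 2 * (exp |x|)⁻¹ * (exp |x| / 2) := by field_simp
    _ ≤ 2 * (exp |x|)⁻¹ * cosh x := by gcongr; linarith

lemma continuous_one_div_cosh_pi_mul : Continuous fun u : ℝ => 1 / cosh (π * u) := by
  fun_prop (disch := exact fun _ => (cosh_pos _).ne')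

lemma integrable_exp_neg_mul_abs {k : ℝ} (hk : 0 < k) :
    Integrable fun x : ℝ => exp (-(k * |x|)) := by
  refine LocallyIntegrable.integrable_of_isBigO_atTop_of_norm_isNegInvariant
    (Continuous.locallyIntegrable (by fun_prop))
    (g := fun x : ℝ => exp (-k * x)) (Eventually.of_forall fun x => by simp) ?_
    ⟨Ioi 0, Ioi_mem_atTop 0, exp_neg_integrableOn_Ioi 0 hk⟩
  refine EventuallyEq.isBigO ?_
  filter_upwards [eventually_ge_atTop 0] with x hx
  rw [abs_of_nonneg hx, neg_mul]

lemma tendsto_exp_neg_mul_abs_cocompact {k : ℝ} (hk : 0 < k) :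
    Tendsto (fun x : ℝ => exp (-(k * |x|))) (cocompact ℝ) (𝓝 0) :=
  tendsto_exp_atBot.comp <| tendsto_neg_atTop_atBot.comp <|
    tendsto_norm_cocompact_atTop.const_mul_atTop hk

lemma integrable_exp_mul_abs_div_cosh {b : ℝ} (hb : b < π) :
    Integrable fun u : ℝ => exp (b * |u|) / cosh (π * u) := by
  refine ((integrable_exp_neg_mul_abs (sub_pos.2 hb)).const_mul 2).mono'
    ((by fun_prop : Continuous fun u : ℝ => exp (b * |u|)).div (by fun_prop)
      fun u => (cosh_pos _).ne').aestronglyMeasurable (Eventually.of_forall fun u => ?_)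
  have hcosh := one_div_cosh_le_two_mul_exp_neg_abs (π * u)
  rw [abs_mul, abs_of_pos pi_pos] at hcosh
  rw [norm_of_nonneg (by positivity), div_eq_mul_one_div]
  calc exp (b * |u|) * (1 / cosh (π * u)) ≤ exp (b * |u|) * (2 * exp (-(π * |u|))) := by gcongr
    _ = 2 * exp (-((π - b) * |u|)) := by rw [mul_left_comm, ← exp_add]; ring_nf

lemma integrable_mul_sech {F : ℝ → ℂ} (hF : Continuous F) {b C : ℝ} (hb : b < π)
    (hFC : ∀ u, ‖F u‖ ≤ C * exp (b * |u|)) :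
    Integrable fun u => F u * ((1 / cosh (π * u) : ℝ) : ℂ) := by
  refine ((integrable_exp_mul_abs_div_cosh hb).const_mul C).mono'
    (hF.mul (Complex.continuous_ofReal.comp continuous_one_div_cosh_pi_mul)).aestronglyMeasurable
    (Eventually.of_forall fun u => ?_)
  rw [norm_mul, Complex.norm_real, norm_of_nonneg (by positivity)]
  calc ‖F u‖ * (1 / cosh (π * u)) ≤ C * exp (b * |u|) * (1 / cosh (π * u)) := by
        gcongr; exact hFC u
    _ = C * (exp (b * |u|) / cosh (π * u)) := by ring

lemma integral_one_div_cosh_pi_mul : ∫ u : ℝ, 1 / cosh (π * u) = 1 := by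
  have hderiv (u : ℝ) :
      HasDerivAt (fun u => arctan (sinh (π * u)) / π) (1 / cosh (π * u)) u := by
    refine (((hasDerivAt_id u).const_mul π).sinh.arctan.div_const π).congr_deriv ?_
    have := cosh_pos (π * u)
    simp only [id, ← cosh_sq']
    field_simp
  have hπ_top : Tendsto (fun u => π * u) atTop atTop := tendsto_id.const_mul_atTop pi_pos
  have hπ_bot : Tendsto (fun u => π * u) atBot atBot := tendsto_id.const_mul_atBot pi_pos
  have hsinh_top : Tendsto sinh atTop atTop := tendsto_atTop_mono' _
    (eventually_ge_atTop 0 |>.mono fun u hu => self_le_sinh_iff.2 hu) tendsto_id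
  have hsinh_bot : Tendsto sinh atBot atBot := tendsto_atBot_mono' _
    (eventually_le_atBot 0 |>.mono fun u hu => sinh_le_self_iff.2 hu) tendsto_id
  have htop := ((tendsto_arctan_atTop.mono_right nhdsWithin_le_nhds).comp
    (hsinh_top.comp hπ_top)).div_const π
  have hbot := ((tendsto_arctan_atBot.mono_right nhdsWithin_le_nhds).comp
    (hsinh_bot.comp hπ_bot)).div_const π
  rw [integral_of_hasDerivAt_of_tendsto hderiv
    (by simpa using integrable_exp_mul_abs_div_cosh pi_pos) hbot htop]
  field_simp
  ring

theorem tendsto_intervalIntegral_of_tendsto_prod_principal {E : Type*} [NormedAddCommGroup E]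
    [NormedSpace ℝ E] {α : Type*} {l : Filter α} {g : α → ℝ → E} {a b : ℝ}
    (h : Tendsto (fun p : α × ℝ => g p.1 p.2) (l ×ˢ 𝓟 [[a, b]]) (𝓝 0)) :
    Tendsto (fun s => ∫ y in a..b, g s y) l (𝓝 0) := by
  rw [Metric.tendsto_nhds] at h ⊢
  intro ε hε
  have hδ : 0 < ε / (|b - a| + 1) := by positivity
  filter_upwards [eventually_prod_principal_iff.1 (h _ hδ)] with s hs
  rw [dist_zero_right]
  calc ‖∫ y in a..b, g s y‖ ≤ ε / (|b - a| + 1) * |b - a| :=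
        intervalIntegral.norm_integral_le_of_norm_le_const fun y hy =>
          (dist_zero_right (g s y) ▸ hs y (uIoc_subset_uIcc hy)).le
    _ < ε := by
        rw [div_mul_eq_mul_div, div_lt_iff₀ (by positivity)]
        nlinarith [abs_nonneg (b - a)]

lemma dslope_div_dslope_of_ne {𝕜 : Type*} [NontriviallyNormedField 𝕜] {f g : 𝕜 → 𝕜} {a b : 𝕜}
    (h : b ≠ a) : dslope f a b / dslope g a b = (f b - f a) / (g b - g a) := by
  rw [dslope_of_ne _ h, dslope_of_ne _ h, slope_def_field, slope_def_field,
    div_div_div_cancel_right₀ (sub_ne_zero.2 h)]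

namespace Complex

theorem integral_add_mul_I_eq_of_differentiableOn {E : Type*} [NormedAddCommGroup E]
    [NormedSpace ℂ E] [CompleteSpace E] {f : ℂ → E} {y₁ y₂ : ℝ}
    (hf : DifferentiableOn ℂ f (im ⁻¹' [[y₁, y₂]]))
    (hdecay : Tendsto (fun p : ℝ × ℝ => f (p.1 + p.2 * I)) (cocompact ℝ ×ˢ 𝓟 [[y₁, y₂]]) (𝓝 0))
    (h₁ : Integrable fun x : ℝ => f (x + y₁ * I)) (h₂ : Integrable fun x : ℝ => f (x + y₂ * I)) :
    ∫ x : ℝ, f (x + y₁ * I) = ∫ x : ℝ, f (x + y₂ * I) := by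
  set V : ℝ → E := fun s => ∫ y in y₁..y₂, f (s + y * I)
  have hV : Tendsto V (cocompact ℝ) (𝓝 0) :=
    tendsto_intervalIntegral_of_tendsto_prod_principal (g := fun (s y : ℝ) => f (s + y * I)) hdecay
  have hrect (R : ℝ) : (∫ x in -R..R, f (x + y₁ * I)) - (∫ x in -R..R, f (x + y₂ * I)) =
      I • V (-R) - I • V R := by
    have := integral_boundary_rect_eq_zero_of_differentiableOn f (-R + y₁ * I) (R + y₂ * I)
      (hf.mono fun z hz => by simpa using hz.2)
    simp only [add_im, neg_im, ofReal_im, neg_zero, mul_im, ofReal_re, I_im, mul_one, I_re,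
      mul_zero, add_zero, zero_add, add_re, neg_re, mul_re, sub_self] at this
    rw [← sub_eq_zero, ← this]
    abel
  have hlim_rect := (intervalIntegral_tendsto_integral h₁ tendsto_neg_atTop_atBot tendsto_id).sub
    (intervalIntegral_tendsto_integral h₂ tendsto_neg_atTop_atBot tendsto_id)
  have hlim_sides : Tendsto (fun R => I • V (-R) - I • V R) atTop (𝓝 0) := by
    simpa using
      ((hV.comp (tendsto_neg_atTop_atBot.mono_right atBot_le_cocompact)).const_smul I).sub
        ((hV.mono_left atTop_le_cocompact).const_smul I)
  exact sub_eq_zero.1 (tendsto_nhds_unique (hlim_rect.congr hrect) hlim_sides)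

lemma exp_abs_re_le_four_mul_norm_cosh {z : ℂ} (hz : 1 ≤ |z.re|) :
    Real.exp |z.re| ≤ 4 * ‖cosh z‖ := by
  have hsub : |Real.exp z.re - Real.exp (-z.re)| ≤ 2 * ‖cosh z‖ := by
    have := abs_norm_sub_norm_le (exp z) (-exp (-z))
    rwa [norm_neg, norm_exp, norm_exp, neg_re, sub_neg_eq_add, ← two_cosh, norm_mul,
      Complex.norm_two] at this
  have habs : Real.exp |z.re| - Real.exp (-|z.re|) ≤ |Real.exp z.re - Real.exp (-z.re)| := by
    rcases le_total 0 z.re with h | h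
    · rw [abs_of_nonneg h]; exact le_abs_self _
    · rw [abs_of_nonpos h, neg_neg]; exact neg_sub (Real.exp z.re) _ ▸ neg_le_abs _
  have h2 : 2 ≤ Real.exp |z.re| := by linarith [Real.add_one_le_exp |z.re|]
  have h1 : Real.exp (-|z.re|) ≤ 1 := Real.exp_le_one_iff.2 (by linarith)
  linarith

-- The zeros of `cosh (π z)` are the points `(k + 1/2) i`, `k : ℤ`.
lemma cosh_pi_mul_ne_zero {z : ℂ} (h0 : 0 ≤ z.im) (h1 : z.im ≤ 1) (hz : z ≠ I / 2) :
    cosh (π * z) ≠ 0 := by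
  rw [← cos_mul_I]
  intro h
  obtain ⟨k, hk⟩ := cos_eq_zero_iff.1 h
  have hre := congrArg re hk
  have him := congrArg im hk
  simp only [mul_re, ofReal_re, ofReal_im, zero_mul, sub_zero, I_re, mul_zero, mul_im, add_zero,
    I_im, mul_one, zero_sub, div_ofNat_re, add_re, re_ofNat, intCast_re, im_ofNat, intCast_im,
    one_re, add_im, one_im, div_ofNat_im, zero_div, mul_eq_zero, pi_ne_zero, false_or] at hre him
  have him' : z.im = -(2 * k + 1) / 2 := by
    field_simp at hre ⊢
    nlinarith [pi_pos]
  have hk : k = -1 := by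
    have : k < 0 := by exact_mod_cast (by linarith : (k : ℝ) < 0)
    have : -2 < k := by exact_mod_cast (by linarith : (-2 : ℝ) < k)
    omega
  refine hz (Complex.ext ?_ ?_) <;> norm_num [him, him', hk]

lemma cosh_pi_mul_I_div_two : cosh (π * (I / 2)) = 0 := by
  rw [show (π : ℂ) * (I / 2) = (π / 2 : ℂ) * I by ring, cosh_mul_I, cos_pi_div_two]

lemma dslope_cosh_pi_mul_ne_zero {z : ℂ} (hz : z.im ∈ [[0, 1]]) :
    dslope (fun w => cosh (π * w)) (I / 2) z ≠ 0 := by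
  rw [uIcc_of_le zero_le_one] at hz
  rcases eq_or_ne z (I / 2) with rfl | hne
  · have hd : HasDerivAt (fun w => cosh (π * w)) (sinh (π * (I / 2)) * π) (I / 2) := by
      simpa using ((hasDerivAt_id (I / 2)).const_mul (π : ℂ)).ccosh
    rw [dslope_same, hd.deriv, show (π : ℂ) * (I / 2) = (π / 2 : ℂ) * I by ring, sinh_mul_I,
      sin_pi_div_two, one_mul]
    exact mul_ne_zero I_ne_zero (ofReal_ne_zero.2 pi_ne_zero)
  · rw [dslope_of_ne _ hne, slope_def_field, cosh_pi_mul_I_div_two, sub_zero]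
    exact div_ne_zero (cosh_pi_mul_ne_zero hz.1 hz.2 hne) (sub_ne_zero.2 hne)

/-- `(Q z - Q (i/2)) / cosh (π z)`, written as a quotient of two difference quotients at `i/2`
so that it is also defined, and holomorphic, at `i/2`. -/
noncomputable def sechQuotient (Q : ℂ → ℂ) (z : ℂ) : ℂ :=
  dslope Q (I / 2) z / dslope (fun w => cosh (π * w)) (I / 2) z

variable {Q : ℂ → ℂ} {b C : ℝ}

lemma sechQuotient_of_ne {z : ℂ} (hz : z ≠ I / 2) :
    sechQuotient Q z = (Q z - Q (I / 2)) / cosh (π * z) := by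
  rw [sechQuotient, dslope_div_dslope_of_ne hz, cosh_pi_mul_I_div_two, sub_zero]

lemma differentiableOn_sechQuotient (hQ : Differentiable ℂ Q) :
    DifferentiableOn ℂ (sechQuotient Q) (im ⁻¹' [[0, 1]]) :=
  (((differentiableOn_dslope univ_mem).2 hQ.differentiableOn).mono (subset_univ _)).div
    (((differentiableOn_dslope univ_mem).2 (by fun_prop)).mono (subset_univ _))
    fun _ hz => dslope_cosh_pi_mul_ne_zero hz

lemma sechQuotient_ofReal (u : ℝ) :
    sechQuotient Q u = (Q u - Q (I / 2)) * ((1 / Real.cosh (π * u) : ℝ) : ℂ) := by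
  rw [sechQuotient_of_ne fun h => by simpa using congrArg im h]
  push_cast
  ring

lemma sechQuotient_ofReal_add_I (u : ℝ) :
    sechQuotient Q (u + I) = -((Q (u + I) - Q (I / 2)) * ((1 / Real.cosh (π * u) : ℝ) : ℂ)) := by
  rw [sechQuotient_of_ne fun h => by simpa using congrArg im h, mul_add, cosh_add_pi_mul_I]
  push_cast
  ring

lemma norm_sechQuotient_le
    (hgrowth : ∀ z : ℂ, z.im ∈ [[0, 1]] → ‖Q z‖ ≤ C * Real.exp (b * |z.re|))
    {x y : ℝ} (hy : y ∈ [[0, 1]]) (hx : 1 ≤ |x|) :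
    ‖sechQuotient Q (x + y * I)‖ ≤
      4 * (C * Real.exp (-((π - b) * |x|)) + ‖Q (I / 2)‖ * Real.exp (-(π * |x|))) := by
  set z : ℂ := x + y * I
  have hre : z.re = x := by simp [z]
  have hz : z ≠ I / 2 := fun h => by
    have : x = 0 := by simpa [z] using congrArg re h
    rw [this, abs_zero] at hx
    linarith
  have hcosh : Real.exp (π * |x|) ≤ 4 * ‖cosh (π * z)‖ := by
    have hre' : |(π * z).re| = π * |x| := by
      rw [re_ofReal_mul, hre, abs_mul, abs_of_pos pi_pos]
    rw [← hre']
    refine exp_abs_re_le_four_mul_norm_cosh ?_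
    rw [hre']
    nlinarith [pi_gt_three]
  have hnum : ‖Q z - Q (I / 2)‖ ≤ C * Real.exp (b * |x|) + ‖Q (I / 2)‖ :=
    (norm_sub_le _ _).trans (add_le_add (hre ▸ hgrowth z (by simpa [z] using hy)) le_rfl)
  rw [sechQuotient_of_ne hz, norm_div]
  calc ‖Q z - Q (I / 2)‖ / ‖cosh (π * z)‖
      ≤ (C * Real.exp (b * |x|) + ‖Q (I / 2)‖) / (Real.exp (π * |x|) / 4) :=
        div_le_div₀ ((norm_nonneg _).trans hnum) hnum (by positivity) (by linarith)
    _ = 4 * (C * Real.exp (-((π - b) * |x|)) + ‖Q (I / 2)‖ * Real.exp (-(π * |x|))) := by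
        rw [show -((π - b) * |x|) = b * |x| + -(π * |x|) by ring, Real.exp_add, Real.exp_neg]
        field_simp

lemma tendsto_sechQuotient (hb : b < π)
    (hgrowth : ∀ z : ℂ, z.im ∈ [[0, 1]] → ‖Q z‖ ≤ C * Real.exp (b * |z.re|)) :
    Tendsto (fun p : ℝ × ℝ => sechQuotient Q (p.1 + p.2 * I)) (cocompact ℝ ×ˢ 𝓟 [[0, 1]])
      (𝓝 0) := by
  have hlim : Tendsto (fun x : ℝ => 4 * (C * Real.exp (-((π - b) * |x|)) +
      ‖Q (I / 2)‖ * Real.exp (-(π * |x|)))) (cocompact ℝ) (𝓝 0) := by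
    simpa using (((tendsto_exp_neg_mul_abs_cocompact (sub_pos.2 hb)).const_mul C).add
      ((tendsto_exp_neg_mul_abs_cocompact pi_pos).const_mul _)).const_mul 4
  refine squeeze_zero_norm' ?_ (hlim.comp tendsto_fst)
  filter_upwards [(tendsto_norm_cocompact_atTop.eventually_ge_atTop 1).prod_inl _,
    (eventually_principal.2 fun y hy => hy).prod_inr _] with p hx hy
  exact norm_sechQuotient_le hgrowth hy hx

lemma integrable_comp_add_mul_I_mul_sech (hQ : Continuous Q) (hb : b < π)
    (hgrowth : ∀ z : ℂ, z.im ∈ [[0, 1]] → ‖Q z‖ ≤ C * Real.exp (b * |z.re|))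
    {y : ℝ} (hy : y ∈ [[0, 1]]) :
    Integrable fun u : ℝ => Q (u + y * I) * ((1 / Real.cosh (π * u) : ℝ) : ℂ) :=
  integrable_mul_sech (by fun_prop) hb fun u => by
    simpa using hgrowth (u + y * I) (by simpa using hy)

lemma integrable_add_I_add_mul_sech (hQ : Continuous Q) (hb : b < π)
    (hgrowth : ∀ z : ℂ, z.im ∈ [[0, 1]] → ‖Q z‖ ≤ C * Real.exp (b * |z.re|)) :
    Integrable fun u : ℝ => (Q (u + I) + Q u) * ((1 / Real.cosh (π * u) : ℝ) : ℂ) := by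
  have h₁ : Integrable fun u : ℝ => Q (u + I) * ((1 / Real.cosh (π * u) : ℝ) : ℂ) := by
    simpa using integrable_comp_add_mul_I_mul_sech hQ hb hgrowth right_mem_uIcc
  have h₀ : Integrable fun u : ℝ => Q u * ((1 / Real.cosh (π * u) : ℝ) : ℂ) := by
    simpa using integrable_comp_add_mul_I_mul_sech hQ hb hgrowth left_mem_uIcc
  simp only [add_mul]
  exact h₁.add h₀

theorem integral_add_I_add_mul_sech (hQ : Differentiable ℂ Q) (hb : b < π)
    (hgrowth : ∀ z : ℂ, z.im ∈ [[0, 1]] → ‖Q z‖ ≤ C * Real.exp (b * |z.re|)) :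
    ∫ u : ℝ, (Q (u + I) + Q u) * ((1 / Real.cosh (π * u) : ℝ) : ℂ) = 2 * Q (I / 2) := by
  set s : ℝ → ℂ := fun u => ((1 / Real.cosh (π * u) : ℝ) : ℂ)
  have hs : Integrable s := by
    simpa [s] using integrable_mul_sech (F := fun _ => 1) continuous_const pi_pos (C := 1)
      (b := 0) (by simp)
  have hs_int : ∫ u, s u = 1 := by
    simp only [s]
    rw [integral_complex_ofReal, integral_one_div_cosh_pi_mul, ofReal_one]
  have h₀ : Integrable fun u : ℝ => Q u * s u := by
    simpa [s] using integrable_comp_add_mul_I_mul_sech hQ.continuous hb hgrowth left_mem_uIcc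
  have h₁ : Integrable fun u : ℝ => Q (u + I) * s u := by
    simpa [s] using integrable_comp_add_mul_I_mul_sech hQ.continuous hb hgrowth right_mem_uIcc
  have hbot (u : ℝ) : sechQuotient Q (u + (0 : ℝ) * I) = Q u * s u - Q (I / 2) * s u := by
    rw [ofReal_zero, zero_mul, add_zero, sechQuotient_ofReal, sub_mul]
  have htop (u : ℝ) : sechQuotient Q (u + (1 : ℝ) * I) = Q (I / 2) * s u - Q (u + I) * s u := by
    rw [ofReal_one, one_mul, sechQuotient_ofReal_add_I, sub_mul, neg_sub]
  have hshift := integral_add_mul_I_eq_of_differentiableOn (differentiableOn_sechQuotient hQ)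
    (tendsto_sechQuotient hb hgrowth) (by simp only [hbot]; exact h₀.sub (hs.const_mul _))
    (by simp only [htop]; exact (hs.const_mul _).sub h₁)
  simp only [hbot, htop] at hshift
  rw [integral_sub h₀ (hs.const_mul _), integral_sub (hs.const_mul _) h₁, integral_const_mul,
    hs_int] at hshift
  simp only [add_mul]
  rw [integral_add h₁ h₀]
  linear_combination hshift

lemma norm_add_half_add_I_mul_pow_le (x : ℝ) (n : ℕ) {z : ℂ} (hz : z.im ∈ [[0, 1]]) :
    ‖((x : ℂ) + 1 / 2 + I * z) ^ n‖ ≤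
      n.factorial * Real.exp (|x| + 1 / 2) * Real.exp (1 * |z.re|) := by
  rw [uIcc_of_le zero_le_one] at hz
  have hw : ‖(x : ℂ) + 1 / 2 + I * z‖ ≤ |x| + 1 / 2 + |z.re| := by
    have hw_re : ((x : ℂ) + 1 / 2 + I * z).re = x + 1 / 2 + -z.im := by simp
    have hw_im : ((x : ℂ) + 1 / 2 + I * z).im = z.re := by simp
    refine (norm_le_abs_re_add_abs_im _).trans ?_
    rw [hw_re, hw_im, add_assoc x]
    gcongr
    refine (abs_add_le x _).trans ?_
    gcongr
    exact abs_le.2 ⟨by linarith [hz.2], by linarith [hz.1]⟩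
  have hexp := pow_div_factorial_le_exp (|x| + 1 / 2 + |z.re|) (by positivity) n
  rw [div_le_iff₀ (by positivity)] at hexp
  calc ‖((x : ℂ) + 1 / 2 + I * z) ^ n‖ ≤ (|x| + 1 / 2 + |z.re|) ^ n := by
        rw [norm_pow]; exact pow_le_pow_left₀ (norm_nonneg _) hw n
    _ ≤ n.factorial * Real.exp (|x| + 1 / 2 + |z.re|) := by linarith
    _ = n.factorial * Real.exp (|x| + 1 / 2) * Real.exp (1 * |z.re|) := by
        rw [one_mul, mul_assoc, ← Real.exp_add]

end Complex

/-- Cancellation lemma, Euler case: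
`(1/2) ∫_ℝ [(x - 1/2 + i u)^n + (x + 1/2 + i u)^n] sech(π u) du = xⁿ`. -/
theorem statement_5 (n : ℕ) (x : ℝ) :
    Integrable (fun u : ℝ =>
      (((x : ℂ) - 1 / 2 + Complex.I * (u : ℂ)) ^ n +
        ((x : ℂ) + 1 / 2 + Complex.I * (u : ℂ)) ^ n) *
        ((1 / Real.cosh (π * u) : ℝ) : ℂ)) ∧
    (1 / 2 : ℂ) * ∫ u : ℝ,
        (((x : ℂ) - 1 / 2 + Complex.I * (u : ℂ)) ^ n +
          ((x : ℂ) + 1 / 2 + Complex.I * (u : ℂ)) ^ n) *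
          ((1 / Real.cosh (π * u) : ℝ) : ℂ) = (x : ℂ) ^ n := by
  let Q : ℂ → ℂ := fun z => ((x : ℂ) + 1 / 2 + Complex.I * z) ^ n
  have hQ : Differentiable ℂ Q := by fun_prop
  have hb : (1 : ℝ) < π := by linarith [pi_gt_three]
  have hgrowth (z : ℂ) (hz : z.im ∈ [[0, 1]]) := Complex.norm_add_half_add_I_mul_pow_le x n hz
  have hsum (u : ℝ) :
      ((x : ℂ) - 1 / 2 + Complex.I * u) ^ n + ((x : ℂ) + 1 / 2 + Complex.I * u) ^ n =
        Q (u + Complex.I) + Q u := by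
    simp only [Q]
    rw [show (x : ℂ) + 1 / 2 + Complex.I * (u + Complex.I) = x - 1 / 2 + Complex.I * u by
      linear_combination Complex.I_sq]
  have hQ_half : Q (Complex.I / 2) = (x : ℂ) ^ n := by
    simp only [Q]
    rw [show (x : ℂ) + 1 / 2 + Complex.I * (Complex.I / 2) = x by
      linear_combination Complex.I_sq / 2]
  simp only [hsum]
  refine ⟨Complex.integrable_add_I_add_mul_sech hQ.continuous hb hgrowth, ?_⟩
  rw [Complex.integral_add_I_add_mul_sech hQ hb hgrowth, hQ_half]
  ring
end

section
/- For natural numbers n and k with 0 ≤ k ≤ n, the Bernoulli numbers satisfy: Σ_{j=0}^{n-k} C(n-k, j) B_{j+k} = Σ_{j=0}^{k} C(k, j) (-1)^j B_{n-j} when 0 ≤ k ≤ n-2 and n ≥ 2; Σ_{j=0}^{n-k} C(n-k, j) B_{j+k} = Σ_{j=0}^{k} C(k, j) (-1)^j B_{n-j} + (-1)^{n-1} when k = n-1 and n ≥ 1; and Σ_{j=0}^{n-k} C(n-k, j) B_{j+k} = Σ_{j=0}^{k} C(k, j) (-1)^j B_{n-j} + n (-1)^{n-1} when k = n and n ≥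 0. -/
open Finset

private noncomputable def Sb (m k : ℕ) : ℚ :=
  ∑ j ∈ Finset.range (m + 1), (m.choose j : ℚ) * bernoulli (j + k)

private lemma Sb_rec (m k : ℕ) : Sb (m + 1) k = Sb m k + Sb m (k + 1) := by
  have h1 : Sb (m+1) k
      = ∑ j ∈ range (m+1), ((m+1).choose (j+1) : ℚ) * bernoulli (j+1+k) + bernoulli k := by
    rw [Sb, Finset.sum_range_succ']
    simp
  have h2 : ∀ j, ((m+1).choose (j+1) : ℚ) = m.choose j + m.choose (j+1) := by
    intro j; rw [Nat.choose_succ_succ]; push_cast; ring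
  simp only [h1, h2, add_mul, Finset.sum_add_distrib]
  have h3 : ∑ j ∈ range (m+1), (m.choose j : ℚ) * bernoulli (j+1+k)
      = Sb m (k+1) := by
    rw [Sb]; apply Finset.sum_congr rfl; intro j _; congr 2; omega
  have h4 : ∑ j ∈ range (m+1), (m.choose (j+1) : ℚ) * bernoulli (j+1+k) + bernoulli k
      = Sb m k := by
    rw [Sb, Finset.sum_range_succ, Finset.sum_range_succ']
    simp [Nat.choose_succ_self]
  linarith [h3, h4]

private lemma bern_odd_zero {n : ℕ} (h : Odd n) (h1 : 1 < n) : bernoulli n = 0 := by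
  rw [bernoulli_eq_bernoulli'_of_ne_one (by omega)]
  exact bernoulli'_eq_zero_of_odd h h1

private lemma hpow (a b : ℕ) (h : a % 2 = b % 2) : ((-1:ℚ))^a = (-1)^b := by
  rcases Nat.even_or_odd a with ha | ha
  · have hb : Even b := by rw [Nat.even_iff] at ha ⊢; omega
    rw [ha.neg_one_pow, hb.neg_one_pow]
  · have hb : Odd b := by rw [Nat.odd_iff] at ha ⊢; omega
    rw [ha.neg_one_pow, hb.neg_one_pow]

private lemma Sb_base (k : ℕ) : Sb 0 k = (-1) ^ k * Sb k 0 := by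
  have h0 : Sb 0 k = bernoulli k := by simp [Sb]
  have h : Sb k 0 = (if k = 1 then (1:ℚ) else 0) + bernoulli k := by
    rw [Sb, Finset.sum_range_succ]
    simp [sum_bernoulli]
  rw [h0, h]
  rcases eq_or_ne k 1 with rfl | hk
  · norm_num [bernoulli_one]
  · rw [if_neg hk, zero_add]
    rcases Nat.even_or_odd k with he | ho
    · rw [he.neg_one_pow, one_mul]
    · rcases eq_or_ne k 0 with rfl | hk0
      · simp
      · rw [bern_odd_zero ho (by omega)]; ring

private lemma Sb_symm (m : ℕ) : ∀ k, Sb m k = (-1) ^ (m + k) * Sb k m := by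
  induction m with
  | zero => intro k; simpa using Sb_base k
  | succ m ih =>
    intro k
    rw [Sb_rec, ih k, ih (k+1), Sb_rec k m]
    ring

private lemma R_reflect (m k : ℕ) :
    ∑ j ∈ Finset.range (k+1), (k.choose j : ℚ) * (-1) ^ j * bernoulli (k + m - j)
      = ∑ i ∈ Finset.range (k+1), (k.choose i : ℚ) * ((-1)^k * (-1)^i) * bernoulli (m + i) := by
  rw [← Finset.sum_range_reflect]
  apply Finset.sum_congr rfl
  intro i hi
  have hik : i ≤ k := by simpa [Nat.lt_succ_iff] using hi
  have h1 : k + 1 - 1 - i = k - i := by omega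
  rw [h1, Nat.choose_symm hik]
  have h2 : ((-1:ℚ)) ^ (k - i) = (-1)^k * (-1)^i := by
    rw [← pow_add]; exact hpow _ _ (by omega)
  have h3 : k + m - (k - i) = m + i := by omega
  rw [h2, h3]

/-- Identities for Bernoulli numbers (`B_1 = -1/2` normalization):
`Σ_{j=0}^{n-k} C(n-k,j) B_{j+k}` equals `Σ_{j=0}^{k} C(k,j) (-1)^j B_{n-j}`
plus a correction term `0`, `(-1)^{n-1}` or `n(-1)^{n-1}` according to whether
`k ≤ n-2`, `k = n-1` or `k = n`. -/
theorem statement_6 (n k : ℕ) (hkn : k ≤ n) :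
    (2 ≤ n → k ≤ n - 2 →
      ∑ j ∈ Finset.range (n - k + 1), ((n - k).choose j : ℚ) * bernoulli (j + k) =
        ∑ j ∈ Finset.range (k + 1), (k.choose j : ℚ) * (-1) ^ j * bernoulli (n - j)) ∧
    (1 ≤ n → k = n - 1 →
      ∑ j ∈ Finset.range (n - k + 1), ((n - k).choose j : ℚ) * bernoulli (j + k) =
        (∑ j ∈ Finset.range (k + 1), (k.choose j : ℚ) * (-1) ^ j * bernoulli (n - j)) +
          (-1 : ℚ) ^ (n - 1)) ∧
    (k = n →
      ∑ j ∈ Finset.range (n - k + 1), ((n - k).choose j : ℚ) * bernoulli (j + k) =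
        (∑ j ∈ Finset.range (k + 1), (k.choose j : ℚ) * (-1) ^ j * bernoulli (n - j)) +
          (n : ℚ) * (-1 : ℚ) ^ (n - 1)) := by
  obtain ⟨m, rfl⟩ := Nat.exists_eq_add_of_le hkn
  have hmk : k + m - k = m := by omega
  have hL : ∑ j ∈ Finset.range (k + m - k + 1), ((k + m - k).choose j : ℚ) * bernoulli (j + k)
      = Sb m k := by rw [hmk]; rfl
  refine ⟨fun h2 hk2 => ?_, fun h1 hk1 => ?_, fun hk0 => ?_⟩
  · -- m ≥ 2 case
    have hm : 2 ≤ m := by omega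
    rw [hL, R_reflect m k, Sb_symm m k, Sb, Finset.mul_sum]
    apply Finset.sum_congr rfl
    intro i _
    have key : ((-1:ℚ))^(m+k) * bernoulli (i+m) = ((-1)^k * (-1)^i) * bernoulli (i+m) := by
      rcases Nat.even_or_odd (i + m) with he | ho
      · have h := Nat.even_iff.mp he
        rw [hpow (m+k) (k+i) (by omega), pow_add]
      · rw [bern_odd_zero ho (by omega)]; ring
    rw [show bernoulli (m+i) = bernoulli (i+m) by rw [Nat.add_comm]]
    linear_combination (k.choose i : ℚ) * key
  · -- m = 1 case
    have hm1 : m = 1 := by omega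
    subst hm1
    rw [hL, R_reflect 1 k, Sb_symm 1 k]
    have hsum : ∑ i ∈ range (k+1),
        (k.choose i:ℚ) * ((-1)^(1+k) - (-1)^k*(-1)^i) * bernoulli (i+1) = (-1)^k := by
      rw [Finset.sum_eq_single_of_mem 0 (Finset.mem_range.mpr (by omega))]
      · simp [bernoulli_one, pow_add]; ring
      · intro i _ hne
        rcases Nat.even_or_odd i with he | ho
        · rw [bern_odd_zero he.add_one (by omega)]; ring
        · rw [ho.neg_one_pow, pow_add]; ring
    have expand : (-1:ℚ)^(1+k) * Sb k 1
        = ∑ i ∈ range (k+1), (k.choose i : ℚ) * ((-1)^(1+k)) * bernoulli (i+1) := by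
      rw [Sb, Finset.mul_sum]; apply Finset.sum_congr rfl; intro i _; ring
    have hRconv : ∑ i ∈ range (k+1), (k.choose i : ℚ) * ((-1)^k * (-1)^i) * bernoulli (1 + i)
        = ∑ i ∈ range (k+1), (k.choose i : ℚ) * ((-1)^k * (-1)^i) * bernoulli (i + 1) := by
      apply Finset.sum_congr rfl; intro i _; rw [Nat.add_comm 1 i]
    have hsplit : ∑ i ∈ range (k+1), (k.choose i : ℚ) * ((-1)^(1+k)) * bernoulli (i+1)
        = (∑ i ∈ range (k+1), (k.choose i : ℚ) * ((-1)^k * (-1)^i) * bernoulli (i+1)) +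
          ∑ i ∈ range (k+1),
            (k.choose i:ℚ) * ((-1)^(1+k) - (-1)^k*(-1)^i) * bernoulli (i+1) := by
      rw [← Finset.sum_add_distrib]; apply Finset.sum_congr rfl; intro i _; ring
    rw [show k + 1 - 1 = k from rfl, expand, hsplit, hsum, hRconv]
  · -- m = 0 case
    have hm0 : m = 0 := by omega
    subst hm0
    have hR0 : ∑ j ∈ Finset.range (k+1), (k.choose j : ℚ) * (-1) ^ j * bernoulli (k + 0 - j)
        = ∑ i ∈ Finset.range (k+1), (k.choose i : ℚ) * ((-1)^k * (-1)^i) * bernoulli i := by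
      rw [R_reflect 0 k]; apply Finset.sum_congr rfl; intro i _; rw [Nat.zero_add]
    have hs : ∑ i ∈ range (k+1), (k.choose i:ℚ) * ((-1)^i * bernoulli i)
        = k + (-1)^k * bernoulli k := by
      simp only [← bernoulli'_eq_bernoulli]
      rw [Finset.sum_range_succ, sum_bernoulli', Nat.choose_self]
      push_cast; ring
    have hL0 : Sb 0 k = bernoulli k := by simp [Sb]
    have hR1 : ∑ i ∈ Finset.range (k+1), (k.choose i : ℚ) * ((-1)^k * (-1)^i) * bernoulli i
        = (-1)^k * (k + (-1)^k * bernoulli k) := by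
      rw [← hs, Finset.mul_sum]; apply Finset.sum_congr rfl; intro i _; ring
    rw [hL, hR0, hR1]
    rw [hL0]
    rcases k with _ | t
    · simp
    · have hx : ((-1:ℚ))^t * (-1)^t = 1 := by
        rw [← pow_add]; simpa using hpow (t+t) 0 rfl
      rw [show t + 1 + 0 - 1 = t from rfl, pow_succ]
      push_cast
      linear_combination (-(bernoulli (t+1) : ℚ)) * hx
end

section
/- For natural numbers n ≥ 2 and 1 ≤ k ≤ n-1, and every real number x, the Bernoulli polynomials satisfy Σ_{j=0}^{n-k} C(n-k, j) B_{j+k}(x) = Σ_{j=0}^{k} C(k, j) (-1)^j B_{n-j}(x) + (n x - (n-k)) · x^{n-k-1} · (x-1)^{k-1}. -/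
open Finset Polynomial

noncomputable def TB (m k : ℕ) (x : ℝ) : ℝ :=
  ∑ j ∈ Finset.range (m + 1), (m.choose j : ℝ) * Polynomial.aeval x (Polynomial.bernoulli (j + k))

noncomputable def RB (n k : ℕ) (x : ℝ) : ℝ :=
  ∑ j ∈ Finset.range (k + 1),
    (k.choose j : ℝ) * (-1) ^ j * Polynomial.aeval x (Polynomial.bernoulli (n - j))

/-- Generic Pascal splitting of a binomially weighted sum. -/
lemma pascal_sum (f : ℕ → ℝ) (m : ℕ) :
    ∑ j ∈ Finset.range (m + 2), ((m + 1).choose j : ℝ) * f j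
      = ∑ j ∈ Finset.range (m + 1), (m.choose j : ℝ) * f j
        + ∑ j ∈ Finset.range (m + 1), (m.choose j : ℝ) * f (j + 1) := by
  rw [Finset.sum_range_succ' (fun j => ((m + 1).choose j : ℝ) * f j) (m + 1)]
  have e1 : ∀ i : ℕ, (((m + 1).choose (i + 1) : ℕ) : ℝ)
      = (m.choose i : ℝ) + (m.choose (i + 1) : ℝ) := by
    intro i; rw [Nat.choose_succ_succ]; push_cast; ring
  simp only [e1, add_mul, Finset.sum_add_distrib]
  have e2 : ∑ i ∈ Finset.range (m + 1), (m.choose (i + 1) : ℝ) * f (i + 1)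
      + ((m + 1).choose 0 : ℝ) * f 0
      = ∑ j ∈ Finset.range (m + 1), (m.choose j : ℝ) * f j := by
    have h0 : (((m + 1).choose 0 : ℕ) : ℝ) * f 0 = ((m.choose 0 : ℕ) : ℝ) * f 0 := by
      simp
    rw [h0, ← Finset.sum_range_succ' (fun j => (m.choose j : ℝ) * f j) (m + 1),
      Finset.sum_range_succ]
    simp [Nat.choose_succ_self]
  linarith [e2]

lemma Tsucc (m k : ℕ) (x : ℝ) : TB (m + 1) k x = TB m k x + TB m (k + 1) x := by
  unfold TB
  have h := pascal_sum (fun j => Polynomial.aeval x (Polynomial.bernoulli (j + k))) m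
  rw [h]
  congr 1
  apply Finset.sum_congr rfl
  intro j _
  have : j + 1 + k = j + (k + 1) := by omega
  rw [this]

lemma Rsucc (n k : ℕ) (x : ℝ) : RB (n + 1) (k + 1) x = RB (n + 1) k x - RB n k x := by
  unfold RB
  have h := pascal_sum (fun j => (-1 : ℝ) ^ j *
      Polynomial.aeval x (Polynomial.bernoulli (n + 1 - j))) k
  have e : ∀ j : ℕ, (k.choose j : ℝ) * ((-1 : ℝ) ^ (j + 1) *
      Polynomial.aeval x (Polynomial.bernoulli (n + 1 - (j + 1))))
      = -((k.choose j : ℝ) * (-1) ^ j * Polynomial.aeval x (Polynomial.bernoulli (n - j))) := by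
    intro j
    rw [Nat.succ_sub_succ, pow_succ]
    ring
  simp only [e, Finset.sum_neg_distrib] at h
  have lhs_eq : ∑ j ∈ Finset.range (k + 1 + 1), ((k + 1).choose j : ℝ) * (-1) ^ j *
      Polynomial.aeval x (Polynomial.bernoulli (n + 1 - j))
      = ∑ j ∈ Finset.range (k + 2), ((k + 1).choose j : ℝ) * ((-1) ^ j *
        Polynomial.aeval x (Polynomial.bernoulli (n + 1 - j))) := by
    apply Finset.sum_congr rfl; intro j _; ring
  have rhs_eq : ∑ j ∈ Finset.range (k + 1), (k.choose j : ℝ) * ((-1) ^ j *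
      Polynomial.aeval x (Polynomial.bernoulli (n + 1 - j)))
      = ∑ j ∈ Finset.range (k + 1), (k.choose j : ℝ) * (-1) ^ j *
        Polynomial.aeval x (Polynomial.bernoulli (n + 1 - j)) := by
    apply Finset.sum_congr rfl; intro j _; ring
  have rhs_eq2 : ∑ j ∈ Finset.range (k + 1), (k.choose j : ℝ) * ((-1) ^ j *
      Polynomial.aeval x (Polynomial.bernoulli (n - j)))
      = ∑ j ∈ Finset.range (k + 1), (k.choose j : ℝ) * (-1) ^ j *
        Polynomial.aeval x (Polynomial.bernoulli (n - j)) := by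
    apply Finset.sum_congr rfl; intro j _; ring
  rw [lhs_eq, h, rhs_eq]
  ring

lemma L0 (m : ℕ) (x : ℝ) :
    TB m 0 x = Polynomial.aeval x (Polynomial.bernoulli m) + (m : ℝ) * x ^ (m - 1) := by
  cases m with
  | zero => simp [TB]
  | succ s =>
    have key := Polynomial.sum_bernoulli s
    have h := congrArg (Polynomial.aeval x (R := ℚ)) key
    simp only [map_sum, map_smul, Polynomial.aeval_monomial, Rat.smul_def, map_add,
      map_natCast, map_one] at h
    have h' : ∑ j ∈ Finset.range (s + 1),
        ((s + 1).choose j : ℝ) * Polynomial.aeval x (Polynomial.bernoulli j)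
        = ((s : ℝ) + 1) * x ^ s := by
      rw [show ((s : ℝ) + 1) * x ^ s = (s : ℝ) * x ^ s + 1 * x ^ s from by ring, ← h]
      apply Finset.sum_congr rfl
      intro j _
      push_cast
      ring
    unfold TB
    have e : ∀ j : ℕ, j + 0 = j := fun j => rfl
    simp only [e]
    rw [Finset.sum_range_succ, h', Nat.choose_self, Nat.add_sub_cancel]
    push_cast
    ring

lemma Tbase (m : ℕ) (hm : 1 ≤ m) (x : ℝ) :
    TB m 1 x = Polynomial.aeval x (Polynomial.bernoulli (m + 1))
      - Polynomial.aeval x (Polynomial.bernoulli m)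
      + (((m : ℝ) + 1) * x - (m : ℝ)) * x ^ (m - 1) := by
  have h := Tsucc m 0 x
  have h01 : (0 : ℕ) + 1 = 1 := rfl
  rw [h01, L0 m x, L0 (m + 1) x, Nat.add_sub_cancel] at h
  have hx : x ^ m = x ^ (m - 1) * x := by
    rw [← pow_succ, Nat.sub_add_cancel hm]
  rw [hx] at h
  push_cast at h ⊢
  linarith

lemma auxmain : ∀ k, 1 ≤ k → ∀ m, 1 ≤ m → ∀ x : ℝ,
    TB m k x = RB (m + k) k x
      + (((m : ℝ) + (k : ℝ)) * x - (m : ℝ)) * x ^ (m - 1) * (x - 1) ^ (k - 1) := by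
  intro k
  induction k with
  | zero => intro h; omega
  | succ k ih =>
    intro _ m hm x
    rcases Nat.eq_zero_or_pos k with hk0 | hk1
    · subst hk0
      have hR : RB (m + 1) 1 x = Polynomial.aeval x (Polynomial.bernoulli (m + 1))
          - Polynomial.aeval x (Polynomial.bernoulli m) := by
        unfold RB
        rw [Finset.sum_range_succ, Finset.sum_range_one]
        simp [sub_eq_add_neg]
      have h01 : m + 0 + 1 = m + 1 := by omega
      rw [h01] at hR ⊢
      rw [hR, Tbase m hm x]
      push_cast
      ring
    · have hT := Tsucc m k x
      have h1 := ih hk1 (m + 1) (by omega) x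
      have h2 := ih hk1 m hm x
      have hR := Rsucc (m + k) k x
      have hmk : m + 1 + k = m + k + 1 := by omega
      rw [hmk] at h1
      have hm2 : m + (k + 1) = m + k + 1 := by omega
      rw [hm2]
      have hTk : TB m (k + 1) x = TB (m + 1) k x - TB m k x := by linarith
      have px : x ^ (m + 1 - 1) = x ^ (m - 1) * x := by
        rw [Nat.add_sub_cancel, ← pow_succ, Nat.sub_add_cancel hm]
      have py : (x - 1) ^ (k + 1 - 1) = (x - 1) ^ (k - 1) * (x - 1) := by
        rw [Nat.add_sub_cancel, ← pow_succ, Nat.sub_add_cancel hk1]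
      rw [px] at h1
      rw [hTk, h1, h2, hR, py]
      push_cast
      ring

/-- Identity for Bernoulli polynomials: for `n ≥ 2`, `1 ≤ k ≤ n-1`,
`Σ_{j=0}^{n-k} C(n-k,j) B_{j+k}(x) = Σ_{j=0}^{k} C(k,j) (-1)^j B_{n-j}(x)
  + (n x - (n-k)) x^{n-k-1} (x-1)^{k-1}`. -/
theorem statement_7 (n k : ℕ) (hn : 2 ≤ n) (hk1 : 1 ≤ k) (hk : k ≤ n - 1) (x : ℝ) :
    ∑ j ∈ Finset.range (n - k + 1),
        ((n - k).choose j : ℝ) * Polynomial.aeval x (Polynomial.bernoulli (j + k)) =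
      (∑ j ∈ Finset.range (k + 1),
        (k.choose j : ℝ) * (-1) ^ j * Polynomial.aeval x (Polynomial.bernoulli (n - j))) +
        ((n : ℝ) * x - ((n : ℝ) - (k : ℝ))) * x ^ (n - k - 1) * (x - 1) ^ (k - 1) := by
  obtain ⟨m, hmn⟩ : ∃ m, n = m + k := ⟨n - k, by omega⟩
  have hm : 1 ≤ m := by omega
  have h := auxmain k hk1 m hm x
  unfold TB RB at h
  subst hmn
  have e : m + k - k = m := by omega
  rw [e]
  push_cast at h ⊢
  linarith [h]
end

section
/- For natural numbers n and k with 0 ≤ k ≤ n, and every real number x, the Euler polynomials satisfy Σ_{j=0}^{n-k} C(n-k, j) (-1)^j E_{j+k}(x) = (-1)^{n+k+1} Σ_{j=0}^{k} C(k, j) E_{n-j}(x) + 2 x^k (1-x)^{n-k}. -/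
/-!
Let `φ` be the linear functional on polynomials sending `X ^ m` to `E m`. Comparing coefficients
in the generating function gives `φ ((X + 1) ^ m) + φ (X ^ m) = 2 x ^ m`, hence by linearity
`φ (p (X + 1)) + φ p = 2 p(x)` for every polynomial `p`. For `p = X ^ k (1 - X) ^ (n - k)`,
`φ p` is the left-hand side, and `p (X + 1) = (-1) ^ (n - k) X ^ (n - k) (X + 1) ^ k` is mapped by
`φ` to `(-1) ^ (n - k) Σ C(k, j) E (n - j)`.
-/

open Polynomial Finset

theorem X_pow_mul_one_sub_X_pow_comp_X_add_one {R : Type*} [CommRing R] (k N : ℕ) :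
    (X ^ k * (1 - X) ^ N : R[X]).comp (X + 1) = C ((-1) ^ N) * (X ^ N * (X + 1) ^ k) := by
  rw [mul_comp, pow_comp, pow_comp, X_comp, sub_comp, one_comp, X_comp]
  simp only [map_pow, map_neg, map_one]
  ring

section Umbral

variable {R : Type*} [CommRing R]

noncomputable def umbralEval (E : ℕ → R) : R[X] →ₗ[R] R :=
  Polynomial.lsum fun m => LinearMap.mulRight R (E m)

variable (E : ℕ → R)

theorem umbralEval_C_mul_X_pow (a : R) (m : ℕ) : umbralEval E (C a * X ^ m) = a * E m := by
  simp [umbralEval, C_mul_X_pow_eq_monomial]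

theorem umbralEval_X_add_one_pow (m : ℕ) :
    umbralEval E ((X + 1) ^ m) = ∑ i ∈ range (m + 1), (m.choose i : R) * E i := by
  simp only [add_pow, one_pow, mul_one, map_sum]
  refine sum_congr rfl fun i _ => ?_
  rw [mul_comm, ← map_natCast C, umbralEval_C_mul_X_pow]

theorem umbralEval_comp_X_add_one_add {x : R}
    (hE : ∀ m, ∑ i ∈ range (m + 1), (m.choose i : R) * E i + E m = 2 * x ^ m) (p : R[X]) :
    umbralEval E (p.comp (X + 1)) + umbralEval E p = 2 * p.eval x := by
  induction p using Polynomial.induction_on' with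
  | add p q hp hq =>
    simp only [add_comp, map_add, eval_add]
    linear_combination hp + hq
  | monomial m a =>
    rw [← C_mul_X_pow_eq_monomial, mul_comp, C_comp, X_pow_comp, umbralEval_C_mul_X_pow,
      ← smul_eq_C_mul, map_smul, umbralEval_X_add_one_pow, smul_eq_mul, eval_mul, eval_C,
      eval_pow, eval_X]
    linear_combination a * hE m

theorem umbralEval_X_pow_mul_one_sub_X_pow (k N : ℕ) :
    umbralEval E (X ^ k * (1 - X) ^ N) =
      ∑ j ∈ range (N + 1), (N.choose j : R) * (-1) ^ j * E (j + k) := by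
  rw [sub_eq_neg_add, add_pow, mul_sum, map_sum]
  refine sum_congr rfl fun j _ => ?_
  have hterm : X ^ k * ((-X) ^ j * 1 ^ (N - j) * (N.choose j : R[X])) =
      C ((N.choose j : R) * (-1) ^ j) * X ^ (j + k) := by
    simp only [map_mul, map_pow, map_neg, map_one, map_natCast]
    ring
  rw [hterm, umbralEval_C_mul_X_pow]

theorem umbralEval_X_pow_mul_X_add_one_pow (N k : ℕ) :
    umbralEval E (X ^ N * (X + 1) ^ k) =
      ∑ i ∈ range (k + 1), (k.choose i : R) * E (N + i) := by
  rw [add_pow, mul_sum, map_sum]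
  refine sum_congr rfl fun i _ => ?_
  have hterm : X ^ N * (X ^ i * 1 ^ (k - i) * (k.choose i : R[X])) =
      C (k.choose i : R) * X ^ (N + i) := by
    rw [map_natCast]
    ring
  rw [hterm, umbralEval_C_mul_X_pow]

end Umbral

theorem sum_choose_mul_add_eq_of_mul_exp_add_one {K : Type*} [Field K] [CharZero K]
    (x : K) (E : ℕ → K)
    (hE : (PowerSeries.mk fun m => E m / (m.factorial : K)) * (PowerSeries.exp K + 1) =
      2 * PowerSeries.rescale x (PowerSeries.exp K)) (m : ℕ) :
    ∑ i ∈ range (m + 1), (m.choose i : K) * E i + E m = 2 * x ^ m := by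
  have h := congrArg (PowerSeries.coeff m) hE
  simp only [two_mul, mul_add, mul_one, map_add, PowerSeries.coeff_mul, PowerSeries.coeff_exp,
    PowerSeries.coeff_mk, PowerSeries.coeff_rescale, Nat.sum_antidiagonal_eq_sum_range_succ_mk,
    one_div, map_inv₀, map_natCast] at h
  have hfact : ∀ j : ℕ, (j.factorial : K) ≠ 0 := fun j => by exact_mod_cast j.factorial_ne_zero
  have hterm : ∀ i ∈ range (m + 1),
      E i / i.factorial * ((m - i).factorial : K)⁻¹ = (m.choose i : K) * E i / m.factorial := by
    intro i hi
    rw [Nat.cast_choose K (Nat.lt_succ_iff.mp (mem_range.mp hi))]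
    field_simp [hfact]
  rw [sum_congr rfl hterm, ← sum_div] at h
  field_simp [hfact] at h
  linear_combination h

/-- Polynomial extension of Kim's identity for the Euler polynomials `E_n(x)`
(defined by the generating function `2 e^{x t}/(e^t + 1) = Σ E_n(x) tⁿ/n!`):
`Σ_{j=0}^{n-k} C(n-k,j) (-1)^j E_{j+k}(x)
  = (-1)^{n+k+1} Σ_{j=0}^{k} C(k,j) E_{n-j}(x) + 2 x^k (1-x)^{n-k}`. -/
theorem statement_8 (n k : ℕ) (hkn : k ≤ n) (x : ℝ) (E : ℕ → ℝ)
    (hE : (PowerSeries.mk fun m => E m / (m.factorial : ℝ)) * (PowerSeries.exp ℝ + 1) =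
      2 * PowerSeries.rescale x (PowerSeries.exp ℝ)) :
    ∑ j ∈ Finset.range (n - k + 1), ((n - k).choose j : ℝ) * (-1) ^ j * E (j + k) =
      (-1 : ℝ) ^ (n + k + 1) * (∑ j ∈ Finset.range (k + 1), (k.choose j : ℝ) * E (n - j)) +
        2 * x ^ k * (1 - x) ^ (n - k) := by
  have key := umbralEval_comp_X_add_one_add E
    (sum_choose_mul_add_eq_of_mul_exp_add_one x E hE) (X ^ k * (1 - X) ^ (n - k))
  have hreflect : ∑ j ∈ range (k + 1), (k.choose j : ℝ) * E (n - j) =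
      ∑ i ∈ range (k + 1), (k.choose i : ℝ) * E (n - k + i) := by
    rw [← sum_range_reflect]
    refine sum_congr rfl fun i hi => ?_
    have hik : i ≤ k := Nat.lt_succ_iff.mp (mem_range.mp hi)
    rw [show k + 1 - 1 - i = k - i by omega, Nat.choose_symm hik,
      show n - (k - i) = n - k + i by omega]
  have hsign : (-1 : ℝ) ^ (n + k + 1) = -(-1) ^ (n - k) := by
    rw [show n + k + 1 = (n - k) + 2 * k + 1 by omega, pow_succ, pow_add, pow_mul]
    norm_num
  rw [X_pow_mul_one_sub_X_pow_comp_X_add_one, ← smul_eq_C_mul, map_smul,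
    umbralEval_X_pow_mul_X_add_one_pow, umbralEval_X_pow_mul_one_sub_X_pow, eval_mul, eval_pow, eval_pow, eval_sub, eval_one,
    eval_X, smul_eq_mul] at key
  rw [hreflect, hsign]
  linear_combination key
end

section
/- (Multivariate Raabe multiplication theorem, Bernoulli case) For every positive integer m, every natural number n, every positive integer k, every vector a = (a₁, …, a_k) of nonzero real numbers, and every real number x, m^{k-n} · B_n^{(k)}(m x | a) = Σ_{l₁=0}^{m-1} ⋯ Σ_{l_k=0}^{m-1} B_n^{(k)}( x + (1/m) Σ_{i=1}^{k} a_i l_i | a ). -/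
/-!
Write `E c` for the series `e^{ct}` and `G_y` for the exponential generating series of
`B_·^{(k)}(y | a)`, so that `G_y · ∏ⱼ (E aⱼ - 1) = (∏ⱼ aⱼ) tᵏ E y`.
Substituting `t ↦ t/m` in the identity for `y = m x` and using the geometric factorisation
`E aⱼ - 1 = (E (aⱼ/m) - 1) · Σ_{l<m} E (l aⱼ/m)` shows that `mᵏ G_{mx}(t/m)` and
`Σ_l G_{x + Σᵢ aᵢ lᵢ/m}(t)` both solve
`F · ∏ⱼ (E aⱼ - 1) = (∏ⱼ aⱼ) tᵏ E x · ∏ⱼ Σ_{l<m} E (l aⱼ/m)`.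
The product `∏ⱼ (E aⱼ - 1)` is a nonzero power series, so the two agree; compare the
coefficients of `tⁿ`.
-/

open PowerSeries

namespace PowerSeries

theorem rescale_C {R : Type*} [CommSemiring R] (c r : R) : rescale c (C r) = C r := by
  ext n
  rcases eq_or_ne n 0 with rfl | hn <;> simp [coeff_rescale, coeff_C, *]

section Exp

variable {A : Type*} [CommRing A] [Algebra ℚ A]

theorem rescale_exp_pow (c : A) (l : ℕ) : rescale c (exp A) ^ l = rescale (l * c) (exp A) := by
  rw [← map_pow, exp_pow_eq_rescale_exp, rescale_rescale]

theorem rescale_exp_sum {ι : Type*} (s : Finset ι) (c : ι → A) :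
    rescale (∑ i ∈ s, c i) (exp A) = ∏ i ∈ s, rescale (c i) (exp A) := by
  classical
  induction s using Finset.induction with
  | empty => simp
  | insert _ _ hi ih =>
    rw [Finset.sum_insert hi, Finset.prod_insert hi, ← ih, exp_mul_exp_eq_exp_add]

theorem rescale_exp_natCast_mul_sub_one (m : ℕ) (c : A) :
    rescale (m * c) (exp A) - 1 =
      (rescale c (exp A) - 1) * ∑ l : Fin m, rescale (l * c) (exp A) := by
  simp_rw [← rescale_exp_pow]
  rw [Fin.sum_univ_eq_sum_range (rescale c (exp A) ^ ·), mul_comm, geom_sum_mul]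

theorem sum_rescale_exp_sum_mul {ι : Type*} [Fintype ι] [DecidableEq ι] (m : ℕ) (c : ι → A) :
    ∑ l : ι → Fin m, rescale (∑ i, (l i : A) * c i) (exp A) =
      ∏ i, ∑ l : Fin m, rescale (l * c i) (exp A) := by
  simp_rw [rescale_exp_sum, Fintype.prod_sum]

theorem prod_rescale_exp_sub_one_ne_zero [IsDomain A] {ι : Type*} (s : Finset ι) {a : ι → A}
    (ha : ∀ i, a i ≠ 0) : ∏ i ∈ s, (rescale (a i) (exp A) - 1) ≠ 0 :=
  Finset.prod_ne_zero_iff.mpr fun i _ h => ha i <| by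
    simpa [coeff_rescale, coeff_exp] using congrArg (coeff 1) h

end Exp

theorem rescale_inv_mul_prod_rescale_exp_sub_one_of_mul_eq {K : Type*} [Field K] [Algebra ℚ K]
    {m : ℕ} (hm : (m : K) ≠ 0) {k : ℕ} (a : Fin k → K) (c y : K) {G : K⟦X⟧}
    (hG : G * ∏ j, (rescale (a j) (exp K) - 1) = C c * X ^ k * rescale y (exp K)) :
    (C ((m : K) ^ k) * rescale (m : K)⁻¹ G) * ∏ j, (rescale (a j) (exp K) - 1) =
      C c * X ^ k * rescale (y / m) (exp K) *
        ∏ j, ∑ l : Fin m, rescale (l * (a j / m)) (exp K) := by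
  have hfactor (j : Fin k) : rescale (a j) (exp K) - 1 =
      (rescale (a j / m) (exp K) - 1) * ∑ l : Fin m, rescale (l * (a j / m)) (exp K) := by
    rw [← rescale_exp_natCast_mul_sub_one, mul_div_cancel₀ _ hm]
  have hscaled := congrArg (rescale (m : K)⁻¹) hG
  simp only [map_mul, map_prod, map_sub, map_one, map_pow, rescale_C, rescale_X,
    rescale_rescale, ← div_eq_mul_inv, mul_pow] at hscaled
  have hunit : C ((m : K) ^ k) * C (m : K)⁻¹ ^ k = 1 := by
    rw [← map_pow, ← map_mul, ← mul_pow, mul_inv_cancel₀ hm, one_pow, map_one]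
  calc (C ((m : K) ^ k) * rescale (m : K)⁻¹ G) * ∏ j, (rescale (a j) (exp K) - 1)
      = C ((m : K) ^ k) * (rescale (m : K)⁻¹ G * ∏ j, (rescale (a j / m) (exp K) - 1)) *
          ∏ j, ∑ l : Fin m, rescale (l * (a j / m)) (exp K) := by
        simp_rw [hfactor, Finset.prod_mul_distrib]; ring
    _ = (C ((m : K) ^ k) * C (m : K)⁻¹ ^ k) * (C c * X ^ k * rescale (y / m) (exp K) *
          ∏ j, ∑ l : Fin m, rescale (l * (a j / m)) (exp K)) := by
        rw [hscaled]; ring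
    _ = _ := by rw [hunit, one_mul]

end PowerSeries

theorem statement_17_general (m : ℕ) (hm : 0 < m) (n k : ℕ)
    (a : Fin k → ℝ) (ha : ∀ j, a j ≠ 0) (x : ℝ) (B : ℝ → ℕ → ℝ)
    (hB : ∀ y : ℝ, (PowerSeries.mk fun i => B y i / (i.factorial : ℝ)) *
        (∏ j, (PowerSeries.rescale (a j) (PowerSeries.exp ℝ) - 1)) =
      PowerSeries.C (∏ j, a j) * PowerSeries.X ^ k *
        PowerSeries.rescale y (PowerSeries.exp ℝ)) :
    (m : ℝ) ^ ((k : ℤ) - (n : ℤ)) * B ((m : ℝ) * x) n =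
      ∑ l : Fin k → Fin m,
        B (x + (1 / (m : ℝ)) * ∑ i, a i * ((l i : ℕ) : ℝ)) n := by
  have hm0 : (m : ℝ) ≠ 0 := Nat.cast_ne_zero.mpr hm.ne'
  have hshift (l : Fin k → Fin m) :
      x + (1 / (m : ℝ)) * ∑ i, a i * ((l i : ℕ) : ℝ) = x + ∑ i, ((l i : ℕ) : ℝ) * (a i / m) := by
    rw [Finset.mul_sum]
    congr 1
    exact Finset.sum_congr rfl fun i _ => by ring
  have hsum : (∑ l : Fin k → Fin m,
        mk fun i => B (x + (1 / (m : ℝ)) * ∑ i, a i * ((l i : ℕ) : ℝ)) i / (i.factorial : ℝ)) *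
      ∏ j, (rescale (a j) (exp ℝ) - 1) =
      C (∏ j, a j) * X ^ k * rescale x (exp ℝ) *
        ∏ j, ∑ l : Fin m, rescale (l * (a j / m)) (exp ℝ) := by
    simp_rw [Finset.sum_mul, hB, hshift, ← exp_mul_exp_eq_exp_add, ← Finset.mul_sum,
      sum_rescale_exp_sum_mul]
    ring
  have hscaled := rescale_inv_mul_prod_rescale_exp_sub_one_of_mul_eq hm0 a _ _ (hB ((m : ℝ) * x))
  rw [mul_div_cancel_left₀ _ hm0] at hscaled
  have hegf := congrArg (coeff n)
    (mul_right_cancel₀ (prod_rescale_exp_sub_one_ne_zero _ ha) (hscaled.trans hsum.symm))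
  simp only [coeff_C_mul, coeff_rescale, coeff_mk, map_sum] at hegf
  rw [← Finset.sum_div, eq_div_iff (Nat.cast_ne_zero.mpr n.factorial_ne_zero)] at hegf
  rw [← hegf, zpow_sub₀ hm0, zpow_natCast, zpow_natCast, inv_pow]
  field_simp

/-- Multivariate Raabe multiplication theorem, Bernoulli case:
`m^{k-n} B_n^{(k)}(m x | a) = Σ_{l₁,…,l_k=0}^{m-1} B_n^{(k)}(x + (1/m) Σ_i a_i l_i | a)`. -/
theorem statement_17 (m : ℕ) (hm : 0 < m) (n k : ℕ) (hk : 0 < k)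
    (a : Fin k → ℝ) (ha : ∀ j, a j ≠ 0) (x : ℝ) (B : ℝ → ℕ → ℝ)
    (hB : ∀ y : ℝ, (PowerSeries.mk fun i => B y i / (i.factorial : ℝ)) *
        (∏ j, (PowerSeries.rescale (a j) (PowerSeries.exp ℝ) - 1)) =
      PowerSeries.C (∏ j, a j) * PowerSeries.X ^ k *
        PowerSeries.rescale y (PowerSeries.exp ℝ)) :
    (m : ℝ) ^ ((k : ℤ) - (n : ℤ)) * B ((m : ℝ) * x) n =
      ∑ l : Fin k → Fin m,
        B (x + (1 / (m : ℝ)) * ∑ i, a i * ((l i : ℕ) : ℝ)) n :=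
  statement_17_general m hm n k a ha x B hB
end
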